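/- arXiv:2511.17281 — 2 statements merged into one kernel-verified Lean document; each statement's English description precedes it below -/
import Mathlib

section
/- Let {U_k} be i.i.d. non-negative random variables with P(U_1=0)<1 and E[U_1^p]<∞ for some p>2, and L the associated renewal process. Then sup_{0≤t≤1} (1/√n)·(nt − S_{L(nt)}) → 0 in probability as n→∞. -/
/-!
If the age at some time `s ≤ n` is at least `ε√n`, then either `S_{Cn} ≤ n` (too few renewals
before time `n`) or one of the first `Cn` inter-arrival times is at least `ε√n / 2`. Choosing `C`
with `C · E[U] > 1`, Chebyshev's inequality bounds the first probability by `O(1/n)`; Markov's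
inequality for the `p`-th moment and a union bound bound the second by `O(n^{1 - p/2})`, which
tends to `0` because `p > 2`.
-/

open MeasureTheory ProbabilityTheory Filter Set Topology
open scoped ENNReal

/-- Sup-distance (uniform distance) of two paths over `[0,1]`, valued in `ℝ≥0∞`. -/
noncomputable def supDistE (x y : ℝ → ℝ) : ℝ≥0∞ :=
  ⨆ t : Set.Icc (0:ℝ) 1, ENNReal.ofReal |x t - y t|

/-- Skorokhod J₁ distance of two paths over `[0,1]`. -/
noncomputable def skorokhodDist (x y : ℝ → ℝ) : ℝ :=
  sInf { d : ℝ | 0 ≤ d ∧ ∃ l : ℝ → ℝ, StrictMonoOn l (Set.Icc 0 1) ∧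
    ContinuousOn l (Set.Icc 0 1) ∧ l 0 = 0 ∧ l 1 = 1 ∧
    ∀ t ∈ Set.Icc (0:ℝ) 1, |l t - t| ≤ d ∧ |x (l t) - y t| ≤ d }

/-- A path is càdlàg on `[0,1]`. -/
def Cadlag (x : ℝ → ℝ) : Prop :=
  (∀ t ∈ Set.Ico (0:ℝ) 1, ContinuousWithinAt x (Set.Icc t 1) t) ∧
  (∀ t ∈ Set.Ioc (0:ℝ) 1, ∃ L : ℝ, Filter.Tendsto x (nhdsWithin t (Set.Iio t)) (nhds L))

/-- Bounded test function, continuous w.r.t. the uniform distance on `[0,1]`. -/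
def UnifTestFun (F : (ℝ → ℝ) → ℝ) : Prop :=
  Measurable F ∧ (∃ M : ℝ, ∀ x, |F x| ≤ M) ∧
  ∀ x : ℝ → ℝ, ∀ ε > (0:ℝ), ∃ δ > (0:ℝ), ∀ y : ℝ → ℝ,
    supDistE x y < ENNReal.ofReal δ → |F x - F y| < ε

/-- Bounded test function, continuous w.r.t. the Skorokhod distance on `[0,1]`. -/
def SkorokhodTestFun (F : (ℝ → ℝ) → ℝ) : Prop :=
  Measurable F ∧ (∃ M : ℝ, ∀ x, |F x| ≤ M) ∧
  ∀ x : ℝ → ℝ, ∀ ε > (0:ℝ), ∃ δ > (0:ℝ), ∀ y : ℝ → ℝ,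
    skorokhodDist x y < δ → |F x - F y| < ε

/-- `μ` is the law (on path space) of a Brownian motion on `[0,1]` with variance parameter `v`. -/
noncomputable def IsBMLaw (v : ℝ) (μ : Measure (ℝ → ℝ)) : Prop :=
  IsProbabilityMeasure μ ∧
  (∀ᵐ f ∂μ, f 0 = 0 ∧ ContinuousOn f (Set.Icc 0 1)) ∧
  (∀ s t : ℝ, 0 ≤ s → s ≤ t → t ≤ 1 →
    μ.map (fun f => f t - f s) = gaussianReal 0 (Real.toNNReal (v * (t - s)))) ∧
  (∀ (k : ℕ) (ts : Fin (k+1) → ℝ), Monotone ts → (∀ i, ts i ∈ Set.Icc (0:ℝ) 1) →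
    iIndepFun
      (fun (i : Fin k) (f : ℝ → ℝ) => f (ts i.succ) - f (ts i.castSucc)) μ)

/-- Partial sums `S_n = U_1 + ⋯ + U_n` (here `U k` denotes the inter-arrival time `U_{k+1}`). -/
def renewalS {Ω : Type*} (U : ℕ → Ω → ℝ) (ω : Ω) (n : ℕ) : ℝ :=
  ∑ k ∈ Finset.range n, U k ω

/-- The renewal counting process `L(t) = #{n ≥ 1 : S_n ≤ t}` (as the largest such `n`). -/
noncomputable def renewalL {Ω : Type*} (U : ℕ → Ω → ℝ) (ω : Ω) (t : ℝ) : ℕ :=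
  sSup {n : ℕ | renewalS U ω n ≤ t}

section Renewal

variable {Ω : Type*} {U : ℕ → Ω → ℝ} {ω : Ω} {s : ℝ} {M : ℕ}

lemma renewalS_succ (U : ℕ → Ω → ℝ) (ω : Ω) (n : ℕ) :
    renewalS U ω (n + 1) = renewalS U ω n + U n ω :=
  Finset.sum_range_succ _ _

lemma renewalS_mono (hU : ∀ k, 0 ≤ U k ω) : Monotone (renewalS U ω) := fun _ _ hab =>
  Finset.sum_le_sum_of_subset_of_nonneg (Finset.range_subset_range.2 hab) fun k _ _ => hU k

lemma lt_of_renewalS_le (hU : ∀ k, 0 ≤ U k ω) (hM : s < renewalS U ω M) {m : ℕ}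
    (hm : renewalS U ω m ≤ s) : m < M :=
  lt_of_not_ge fun hMm => (hM.trans_le (renewalS_mono hU hMm)).not_ge hm

lemma bddAbove_renewalS_le (hU : ∀ k, 0 ≤ U k ω) (hM : s < renewalS U ω M) :
    BddAbove {m : ℕ | renewalS U ω m ≤ s} :=
  ⟨M, fun _ hm => (lt_of_renewalS_le hU hM hm).le⟩

lemma renewalS_renewalL_le (hU : ∀ k, 0 ≤ U k ω) (hs : 0 ≤ s) (hM : s < renewalS U ω M) :
    renewalS U ω (renewalL U ω s) ≤ s :=
  Nat.sSup_mem ⟨0, by simpa [renewalS] using hs⟩ (bddAbove_renewalS_le hU hM)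

lemma lt_renewalS_renewalL_succ (hU : ∀ k, 0 ≤ U k ω) (hM : s < renewalS U ω M) :
    s < renewalS U ω (renewalL U ω s + 1) :=
  lt_of_not_ge fun h => (Nat.lt_succ_self _).not_ge (le_csSup (bddAbove_renewalS_le hU hM) h)

lemma age_lt_of_forall_lt (hU : ∀ k, 0 ≤ U k ω) (hs : 0 ≤ s) (hM : s < renewalS U ω M)
    {c : ℝ} (hc : ∀ k < M, U k ω < c) : s - renewalS U ω (renewalL U ω s) < c := by
  have hlast := lt_renewalS_renewalL_succ hU hM
  rw [renewalS_succ] at hlast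
  have := hc _ (lt_of_renewalS_le hU hM (renewalS_renewalL_le hU hs hM))
  linarith

noncomputable def normalizedMaxAge (U : ℕ → Ω → ℝ) (ω : Ω) (n : ℕ) : ℝ≥0∞ :=
  ⨆ t : Set.Icc (0:ℝ) 1, ENNReal.ofReal ((Real.sqrt n)⁻¹ *
    ((n:ℝ) * t - renewalS U ω (renewalL U ω ((n:ℝ) * t))))

lemma normalizedMaxAge_le (hU : ∀ k, 0 ≤ U k ω) {n : ℕ} (hn : 0 < n)
    (hM : (n : ℝ) < renewalS U ω M) {c : ℝ} (hc : ∀ k < M, U k ω < c * Real.sqrt n) :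
    normalizedMaxAge U ω n ≤ ENNReal.ofReal c := by
  refine iSup_le fun ⟨t, ht0, ht1⟩ => ENNReal.ofReal_le_ofReal ?_
  have hsqrt : 0 < Real.sqrt n := Real.sqrt_pos.2 (Nat.cast_pos.2 hn)
  have hnt : (n:ℝ) * t ≤ n := mul_le_of_le_one_right n.cast_nonneg ht1
  have hage := age_lt_of_forall_lt hU (by positivity) (hnt.trans_lt hM) hc
  rw [inv_mul_le_iff₀ hsqrt, mul_comm (Real.sqrt _)]
  exact hage.le

end Renewal

section Moments

variable {Ω : Type*} [MeasurableSpace Ω] {P : Measure Ω}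

lemma memLp_two_of_integrable_rpow [IsFiniteMeasure P] {X : Ω → ℝ}
    (hX : AEStronglyMeasurable X P) (hX0 : ∀ ω, 0 ≤ X ω) {p : ℝ} (hp : 2 ≤ p)
    (hint : Integrable (fun ω => X ω ^ p) P) : MemLp X 2 P := by
  have hp' : ENNReal.ofReal p ≠ 0 := (ENNReal.ofReal_pos.2 (by linarith)).ne'
  have : MemLp X (ENNReal.ofReal p) P := by
    refine (integrable_norm_rpow_iff hX hp' ENNReal.ofReal_ne_top).1 ?_
    simpa [ENNReal.toReal_ofReal (by linarith : (0:ℝ) ≤ p), Real.norm_of_nonneg (hX0 _)]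
      using hint
  exact this.mono_exponent (by simpa using ENNReal.ofReal_le_ofReal hp)

lemma integral_pos_of_measure_eq_zero_lt_one [IsProbabilityMeasure P] {X : Ω → ℝ}
    (hX : Measurable X) (hX0 : ∀ ω, 0 ≤ X ω) (hint : Integrable X P)
    (hzero : P {ω | X ω = 0} < 1) : 0 < ∫ ω, X ω ∂P := by
  have hmeas : MeasurableSet {ω | X ω = 0} := hX (measurableSet_singleton 0)
  rw [integral_pos_iff_support_of_nonneg hX0 hint, Function.support, ← compl_ofPred,
    prob_compl_eq_one_sub hmeas]
  exact tsub_pos_of_lt hzero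

lemma measure_ge_le_integral_rpow_div [IsFiniteMeasure P] {X : Ω → ℝ} (hX0 : ∀ ω, 0 ≤ X ω)
    {p : ℝ} (hp : 0 ≤ p) (hint : Integrable (fun ω => X ω ^ p) P) {a : ℝ} (ha : 0 < a) :
    P {ω | a ≤ X ω} ≤ ENNReal.ofReal ((∫ ω, X ω ^ p ∂P) / a ^ p) := by
  have hap : 0 < a ^ p := Real.rpow_pos_of_pos ha p
  calc P {ω | a ≤ X ω} ≤ P {ω | a ^ p ≤ X ω ^ p} :=
        measure_mono fun ω hω => Real.rpow_le_rpow ha.le hω hp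
    _ ≤ ENNReal.ofReal ((∫ ω, X ω ^ p ∂P) / a ^ p) := by
        rw [ENNReal.le_ofReal_iff_toReal_le (measure_ne_top _ _)
          (div_nonneg (integral_nonneg fun ω => Real.rpow_nonneg (hX0 ω) p) hap.le),
          le_div_iff₀ hap, mul_comm]
        exact mul_meas_ge_le_integral_of_nonneg
          (ae_of_all _ fun ω => Real.rpow_nonneg (hX0 ω) p) hint _

end Moments

lemma tendsto_natCast_div_sqrt_rpow {p : ℝ} (hp : 2 < p) :
    Tendsto (fun n : ℕ => (n : ℝ) / Real.sqrt n ^ p) atTop (𝓝 0) := by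
  have h := (tendsto_rpow_neg_atTop (by linarith : 0 < p / 2 - 1)).comp
    tendsto_natCast_atTop_atTop
  refine h.congr' (Eventually.of_forall fun n => ?_)
  have hn : (0:ℝ) ≤ n := n.cast_nonneg
  simp only [Function.comp_apply]
  rw [Real.sqrt_eq_rpow, ← Real.rpow_mul hn, neg_sub,
    Real.rpow_sub' hn (by linarith), Real.rpow_one]
  ring_nf

section IID

variable {Ω : Type*} [MeasurableSpace Ω] {P : Measure Ω} {U : ℕ → Ω → ℝ}

lemma integral_renewalS (hU : ∀ k, Integrable (U k) P)
    (hident : ∀ k, IdentDistrib (U k) (U 0) P P) (N : ℕ) :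
    ∫ ω, renewalS U ω N ∂P = N * ∫ ω, U 0 ω ∂P := by
  simp [renewalS, integral_finsetSum _ fun k _ => hU k, (hident _).integral_eq]

lemma variance_renewalS (hU : ∀ k, MemLp (U k) 2 P)
    (hindep : Pairwise fun i j => U i ⟂ᵢ[P] U j)
    (hident : ∀ k, IdentDistrib (U k) (U 0) P P) (N : ℕ) :
    variance (fun ω => renewalS U ω N) P = N * variance (U 0) P := by
  have : (fun ω => renewalS U ω N) = ∑ k ∈ Finset.range N, U k := by
    ext ω; simp [renewalS]
  rw [this, IndepFun.variance_sum (fun k _ => hU k) fun i _ j _ hij => hindep hij]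
  simp [(hident _).variance_eq]

lemma measure_renewalS_le_le [IsFiniteMeasure P] (hU : ∀ k, MemLp (U k) 2 P)
    (hindep : Pairwise fun i j => U i ⟂ᵢ[P] U j)
    (hident : ∀ k, IdentDistrib (U k) (U 0) P P) {N : ℕ} {x c : ℝ} (hc : 0 < c)
    (hxc : x + c ≤ N * ∫ ω, U 0 ω ∂P) :
    P {ω | renewalS U ω N ≤ x} ≤ ENNReal.ofReal (N * variance (U 0) P / c ^ 2) := by
  have hSN : MemLp (fun ω => renewalS U ω N) 2 P := by
    simpa [renewalS] using memLp_finsetSum (Finset.range N) fun k _ => hU k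
  calc P {ω | renewalS U ω N ≤ x}
      ≤ P {ω | c ≤ |renewalS U ω N - ∫ ω', renewalS U ω' N ∂P|} := by
        refine measure_mono fun ω (hω : renewalS U ω N ≤ x) => ?_
        show c ≤ |_|
        rw [integral_renewalS (fun k => (hU k).integrable one_le_two) hident, abs_sub_comm]
        exact (by linarith : c ≤ _).trans (le_abs_self _)
    _ ≤ ENNReal.ofReal (N * variance (U 0) P / c ^ 2) := by
        rw [← variance_renewalS hU hindep hident]
        exact meas_ge_le_variance_div_sq hSN hc

lemma measure_exists_lt_ge_le (hident : ∀ k, IdentDistrib (U k) (U 0) P P) (N : ℕ) (a : ℝ) :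
    P {ω | ∃ k < N, a ≤ U k ω} ≤ N * P {ω | a ≤ U 0 ω} := by
  have hsub : {ω | ∃ k < N, a ≤ U k ω} ⊆ ⋃ k ∈ Finset.range N, {ω | a ≤ U k ω} :=
    fun ω ⟨k, hk, hka⟩ => Set.mem_biUnion (Finset.mem_range.2 hk) hka
  have hk : ∀ k, P {ω | a ≤ U k ω} = P {ω | a ≤ U 0 ω} := fun k =>
    (hident k).measure_mem_eq measurableSet_Ici
  calc P {ω | ∃ k < N, a ≤ U k ω} ≤ ∑ k ∈ Finset.range N, P {ω | a ≤ U k ω} :=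
        (measure_mono hsub).trans (measure_biUnion_finset_le _ _)
    _ = N * P {ω | a ≤ U 0 ω} := by simp [hk]

lemma tendsto_measure_renewalS_mul_le [IsFiniteMeasure P] (hU : ∀ k, MemLp (U k) 2 P)
    (hindep : Pairwise fun i j => U i ⟂ᵢ[P] U j)
    (hident : ∀ k, IdentDistrib (U k) (U 0) P P) {C : ℕ} (hC : 1 < C * ∫ ω, U 0 ω ∂P) :
    Tendsto (fun n : ℕ => P {ω | renewalS U ω (C * n) ≤ n}) atTop (𝓝 0) := by
  set m := ∫ ω, U 0 ω ∂P
  have hlim := ENNReal.tendsto_ofReal (tendsto_const_div_atTop_nhds_zero_nat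
    (C * variance (U 0) P / (C * m - 1) ^ 2))
  rw [ENNReal.ofReal_zero] at hlim
  refine tendsto_of_tendsto_of_tendsto_of_le_of_le' tendsto_const_nhds hlim
    (Eventually.of_forall fun n => zero_le) ?_
  filter_upwards [eventually_gt_atTop 0] with n hn
  have hn' : (0:ℝ) < n := Nat.cast_pos.2 hn
  have hCm : 0 < C * m - 1 := by linarith
  refine (measure_renewalS_le_le hU hindep hident (mul_pos hn' hCm) ?_).trans_eq ?_
  · push_cast
    linarith
  · congr 1
    push_cast
    field_simp

lemma tendsto_measure_exists_lt_ge [IsFiniteMeasure P]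
    (hident : ∀ k, IdentDistrib (U k) (U 0) P P) (hU0 : ∀ ω, 0 ≤ U 0 ω) {p : ℝ} (hp : 2 < p)
    (hmom : Integrable (fun ω => U 0 ω ^ p) P) (C : ℕ) {c : ℝ} (hc : 0 < c) :
    Tendsto (fun n : ℕ => P {ω | ∃ k < C * n, c * Real.sqrt n ≤ U k ω}) atTop (𝓝 0) := by
  set I := ∫ ω, U 0 ω ^ p ∂P
  have hlim := ENNReal.tendsto_ofReal
    ((tendsto_natCast_div_sqrt_rpow hp).const_mul (C * I / c ^ p))
  rw [mul_zero, ENNReal.ofReal_zero] at hlim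
  refine tendsto_of_tendsto_of_tendsto_of_le_of_le' tendsto_const_nhds hlim
    (Eventually.of_forall fun n => zero_le) ?_
  filter_upwards [eventually_gt_atTop 0] with n hn
  have ha : 0 < c * Real.sqrt n := by positivity
  calc _ ≤ (C * n : ℕ) * P {ω | c * Real.sqrt n ≤ U 0 ω} := measure_exists_lt_ge_le hident _ _
    _ ≤ (C * n : ℕ) * ENNReal.ofReal (I / (c * Real.sqrt n) ^ p) := by
        gcongr
        exact measure_ge_le_integral_rpow_div hU0 (by linarith) hmom ha
    _ = _ := by
        rw [← ENNReal.ofReal_natCast, ← ENNReal.ofReal_mul (by positivity),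
          Real.mul_rpow hc.le (Real.sqrt_nonneg _)]
        congr 1
        push_cast
        ring

end IID

/-- the normalized age process satisfies
`sup_{0≤t≤1} (1/√n)·(nt − S_{L(nt)}) → 0` in probability. -/
theorem stmt13 {Ω : Type*} [MeasurableSpace Ω] (P : Measure Ω) [IsProbabilityMeasure P]
    (U : ℕ → Ω → ℝ) (hmeas : ∀ k, Measurable (U k))
    (hindep : iIndepFun U P)
    (hident : ∀ k, IdentDistrib (U k) (U 0) P P)
    (hnonneg : ∀ k ω, 0 ≤ U k ω)
    (hzero : P {ω | U 0 ω = 0} < 1)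
    (p : ℝ) (hp : 2 < p)
    (hmom : Integrable (fun ω => U 0 ω ^ p) P) :
    ∀ ε > (0:ℝ),
      Tendsto
        (fun n : ℕ => P {ω | ENNReal.ofReal ε ≤
          ⨆ t : Set.Icc (0:ℝ) 1, ENNReal.ofReal ((Real.sqrt n)⁻¹ *
            ((n:ℝ) * t - renewalS U ω (renewalL U ω ((n:ℝ) * t))))})
        atTop (𝓝 0) := by
  intro ε hε
  have hL2 : ∀ k, MemLp (U k) 2 P := fun k => (hident k).memLp_iff.2 <|
    memLp_two_of_integrable_rpow (hmeas 0).aestronglyMeasurable (hnonneg 0) hp.le hmom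
  have hm : 0 < ∫ ω, U 0 ω ∂P := integral_pos_of_measure_eq_zero_lt_one (hmeas 0) (hnonneg 0)
    ((hL2 0).integrable one_le_two) hzero
  obtain ⟨C, hC⟩ := exists_nat_gt (1 / ∫ ω, U 0 ω ∂P)
  rw [div_lt_iff₀ hm] at hC
  have hsub : ∀ n : ℕ, 0 < n → {ω | ENNReal.ofReal ε ≤ normalizedMaxAge U ω n} ⊆
      {ω | renewalS U ω (C * n) ≤ n} ∪ {ω | ∃ k < C * n, ε / 2 * Real.sqrt n ≤ U k ω} := by
    intro n hn ω hω
    by_contra! h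
    simp only [mem_union, mem_ofPred_eq, not_or, not_le, not_exists, not_and] at h
    have := hω.trans (normalizedMaxAge_le (fun k => hnonneg k ω) hn h.1 h.2)
    linarith [(ENNReal.ofReal_le_ofReal_iff (by positivity)).1 this]
  have hlim := (tendsto_measure_renewalS_mul_le hL2 (fun i j hij => hindep.indepFun hij)
    hident hC).add (tendsto_measure_exists_lt_ge hident (hnonneg 0) hp hmom C (half_pos hε))
  rw [add_zero] at hlim
  refine tendsto_of_tendsto_of_tendsto_of_le_of_le' tendsto_const_nhds hlim
    (Eventually.of_forall fun n => zero_le) ?_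
  filter_upwards [eventually_gt_atTop 0] with n hn
  exact (measure_mono (hsub n hn)).trans (measure_union_le _ _)
end

section
/- Let x_n → x in D[0,1] (Skorokhod topology) where x is continuous, and let φ_n → φ in D_0 (the space of non-decreasing càdlàg functions from [0,1] into [0,1]) where φ is continuous. Then x_n ∘ φ_n → x ∘ φ in D[0,1]. -/
/-!
Since the limit `x₀` is continuous, Skorokhod convergence `xₙ → x₀` is uniform convergence on
`[0,1]`: a time change `λ` with `|λ t - t|` small moves the uniformly continuous `x₀` only a
little. The same holds for `φₙ → φ₀`, and uniform convergence is stable under composition with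
a uniformly continuous outer limit. Finally the identity time change shows that uniform
convergence implies Skorokhod convergence. Extracting a time change from `skorokhodDist x y < δ`
needs the infimum to range over a nonempty set (`sInf ∅ = 0`), which is the case for bounded
paths; càdlàg paths are bounded by compactness of `[0,1]`.
-/

open MeasureTheory ProbabilityTheory Filter Set Topology
open scoped ENNReal

theorem TendstoUniformlyOn.comp_of_mapsTo {ι α β γ : Type*} [UniformSpace α]
    [PseudoMetricSpace β] {p : Filter ι} {F : ι → α → β} {f : α → β} {s : Set α}
    {G : ι → γ → α} {g : γ → α} {t : Set γ} (hF : TendstoUniformlyOn F f p s)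
    (hf : UniformContinuousOn f s) (hG : TendstoUniformlyOn G g p t)
    (hGt : ∀ n, MapsTo (G n) t s) (hgt : MapsTo g t s) :
    TendstoUniformlyOn (fun n => F n ∘ G n) (f ∘ g) p t := by
  have hfG := hf.comp_tendstoUniformlyOn_eventually
    (Eventually.of_forall fun n _ hx => hGt n hx) hgt hG
  refine Metric.tendstoUniformlyOn_iff.2 fun ε hε => ?_
  filter_upwards [Metric.tendstoUniformlyOn_iff.1 hfG (ε / 2) (half_pos hε),
    Metric.tendstoUniformlyOn_iff.1 hF (ε / 2) (half_pos hε)] with n hfGn hFn x hx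
  calc dist (f (g x)) (F n (G n x))
      ≤ dist (f (g x)) (f (G n x)) + dist (f (G n x)) (F n (G n x)) := dist_triangle _ _ _
    _ < ε / 2 + ε / 2 := add_lt_add (hfGn x hx) (hFn _ (hGt n hx))
    _ = ε := add_halves ε

open Bornology

def skorokhodBounds (x y : ℝ → ℝ) : Set ℝ :=
  { d : ℝ | 0 ≤ d ∧ ∃ l : ℝ → ℝ, StrictMonoOn l (Set.Icc 0 1) ∧
    ContinuousOn l (Set.Icc 0 1) ∧ l 0 = 0 ∧ l 1 = 1 ∧
    ∀ t ∈ Set.Icc (0:ℝ) 1, |l t - t| ≤ d ∧ |x (l t) - y t| ≤ d }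

lemma skorokhodDist_nonneg (x y : ℝ → ℝ) : 0 ≤ skorokhodDist x y :=
  Real.sInf_nonneg fun _ hd => hd.1

lemma mem_skorokhodBounds_of_abs_sub_le {x y : ℝ → ℝ} {d : ℝ} (hd : 0 ≤ d)
    (hxy : ∀ t ∈ Icc (0:ℝ) 1, |x t - y t| ≤ d) : d ∈ skorokhodBounds x y :=
  ⟨hd, id, strictMono_id.strictMonoOn _, continuousOn_id, rfl, rfl,
    fun t ht => ⟨by simpa using hd, hxy t ht⟩⟩

lemma skorokhodDist_le_of_abs_sub_le {x y : ℝ → ℝ} {d : ℝ} (hd : 0 ≤ d)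
    (hxy : ∀ t ∈ Icc (0:ℝ) 1, |x t - y t| ≤ d) : skorokhodDist x y ≤ d :=
  csInf_le ⟨0, fun _ hd => hd.1⟩ (mem_skorokhodBounds_of_abs_sub_le hd hxy)

lemma Cadlag.exists_mem_nhdsWithin_isBounded_image {x : ℝ → ℝ} (hx : Cadlag x) {t : ℝ}
    (ht : t ∈ Icc (0:ℝ) 1) : ∃ u ∈ 𝓝[Icc 0 1] t, IsBounded (x '' u) := by
  have hleft : ∃ L, Tendsto x (𝓝[Icc 0 1 ∩ Iio t] t) (𝓝 L) := by
    rcases ht.1.eq_or_lt with rfl | h0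
    · have hempty : Icc (0:ℝ) 1 ∩ Iio 0 = ∅ :=
        eq_empty_of_forall_notMem fun s hs => hs.2.not_ge hs.1.1
      exact ⟨0, by simp only [hempty, nhdsWithin_empty, tendsto_bot]⟩
    · obtain ⟨L, hL⟩ := hx.2 t ⟨h0, ht.2⟩
      exact ⟨L, hL.mono_left (nhdsWithin_mono _ inter_subset_right)⟩
  have hright : ContinuousWithinAt x (Icc 0 1 ∩ Ici t) t := by
    rcases ht.2.lt_or_eq with h1 | rfl
    · exact (hx.1 t ⟨ht.1, h1⟩).mono fun s hs => ⟨hs.2, hs.1.2⟩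
    · exact continuousWithinAt_singleton.mono fun s hs => le_antisymm hs.1.2 hs.2
  obtain ⟨L, hL⟩ := hleft
  refine ⟨x ⁻¹' Metric.ball L 1 ∪ x ⁻¹' Metric.ball (x t) 1, ?_, ?_⟩
  · have hsplit : Icc 0 1 ⊆ (Icc 0 1 ∩ Iio t) ∪ (Icc 0 1 ∩ Ici t) := fun s hs =>
      (lt_or_ge s t).imp (⟨hs, ·⟩) (⟨hs, ·⟩)
    refine nhdsWithin_mono t hsplit ?_
    rw [nhdsWithin_union]
    exact union_mem_sup (hL (Metric.ball_mem_nhds L one_pos))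
      (hright (Metric.ball_mem_nhds (x t) one_pos))
  · rw [image_union]
    exact (Metric.isBounded_ball.subset (image_preimage_subset _ _)).union
      (Metric.isBounded_ball.subset (image_preimage_subset _ _))

lemma Cadlag.isBounded_image {x : ℝ → ℝ} (hx : Cadlag x) : IsBounded (x '' Icc 0 1) :=
  isCompact_Icc.induction_on (p := fun s => IsBounded (x '' s)) (by simp)
    (fun _ _ hst h => h.subset (image_mono hst))
    (fun _ _ hs ht => by simpa only [image_union] using hs.union ht)
    fun _ ht => hx.exists_mem_nhdsWithin_isBounded_image ht

lemma skorokhodBounds_nonempty {x y : ℝ → ℝ} (hx : IsBounded (x '' Icc 0 1))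
    (hy : IsBounded (y '' Icc 0 1)) : (skorokhodBounds x y).Nonempty := by
  obtain ⟨C, hC⟩ := (hx.union hy).subset_closedBall 0
  have hbound : ∀ t ∈ Icc (0:ℝ) 1, |x t - y t| ≤ C + C := fun t ht => by
    have hxt := hC (Or.inl (mem_image_of_mem x ht))
    have hyt := hC (Or.inr (mem_image_of_mem y ht))
    simp only [Metric.mem_closedBall, Real.dist_eq, sub_zero] at hxt hyt
    exact (abs_sub _ _).trans (add_le_add hxt hyt)
  exact ⟨_, mem_skorokhodBounds_of_abs_sub_le
    ((abs_nonneg _).trans (hbound 0 ⟨le_rfl, zero_le_one⟩)) hbound⟩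

lemma exists_timeChange_of_skorokhodDist_lt {x y : ℝ → ℝ} {δ : ℝ}
    (hx : IsBounded (x '' Icc 0 1)) (hy : IsBounded (y '' Icc 0 1))
    (h : skorokhodDist x y < δ) :
    ∃ l : ℝ → ℝ, ContinuousOn l (Icc 0 1) ∧ l 0 = 0 ∧ l 1 = 1 ∧
      ∀ t ∈ Icc (0:ℝ) 1, |l t - t| < δ ∧ |x (l t) - y t| < δ := by
  obtain ⟨d, ⟨-, l, -, hl, hl0, hl1, hld⟩, hdδ⟩ :=
    exists_lt_of_csInf_lt (skorokhodBounds_nonempty hx hy) h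
  exact ⟨l, hl, hl0, hl1, fun t ht =>
    ⟨(hld t ht).1.trans_lt hdδ, (hld t ht).2.trans_lt hdδ⟩⟩

lemma exists_pos_forall_abs_sub_lt_of_skorokhodDist_lt {y : ℝ → ℝ}
    (hy : ContinuousOn y (Icc 0 1)) {ε : ℝ} (hε : 0 < ε) :
    ∃ δ > 0, ∀ x : ℝ → ℝ, IsBounded (x '' Icc 0 1) → skorokhodDist x y < δ →
      ∀ s ∈ Icc (0:ℝ) 1, |x s - y s| < ε := by
  obtain ⟨η, hη, hyη⟩ := Metric.uniformContinuousOn_iff.1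
    (isCompact_Icc.uniformContinuousOn_of_continuous hy) (ε / 2) (half_pos hε)
  refine ⟨min η (ε / 2), lt_min hη (half_pos hε), fun x hx hxy s hs => ?_⟩
  obtain ⟨l, hl, hl0, hl1, hld⟩ := exists_timeChange_of_skorokhodDist_lt hx
    (isCompact_Icc.image_of_continuousOn hy).isBounded hxy
  obtain ⟨t, ht, rfl⟩ : s ∈ l '' Icc 0 1 :=
    intermediate_value_Icc zero_le_one hl (by rwa [hl0, hl1])
  have hyl : |y t - y (l t)| < ε / 2 := by
    simpa only [Real.dist_eq] using hyη _ ht _ hs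
      (by simpa only [Real.dist_eq, abs_sub_comm] using (hld t ht).1.trans_le (min_le_left _ _))
  calc |x (l t) - y (l t)| ≤ |x (l t) - y t| + |y t - y (l t)| := abs_sub_le _ _ _
    _ < ε / 2 + ε / 2 := add_lt_add ((hld t ht).2.trans_le (min_le_right _ _)) hyl
    _ = ε := add_halves ε

lemma tendstoUniformlyOn_of_tendsto_skorokhodDist {ι : Type*} {p : Filter ι} {y : ι → ℝ → ℝ}
    {y₀ : ℝ → ℝ} (hy : ∀ n, IsBounded (y n '' Icc 0 1)) (hy₀ : ContinuousOn y₀ (Icc 0 1))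
    (h : Tendsto (fun n => skorokhodDist (y n) y₀) p (𝓝 0)) :
    TendstoUniformlyOn y y₀ p (Icc 0 1) := by
  refine Metric.tendstoUniformlyOn_iff.2 fun ε hε => ?_
  obtain ⟨δ, hδ, hclose⟩ := exists_pos_forall_abs_sub_lt_of_skorokhodDist_lt hy₀ hε
  filter_upwards [h.eventually (gt_mem_nhds hδ)] with n hn s hs
  rw [dist_comm, Real.dist_eq]
  exact hclose (y n) (hy n) hn s hs

lemma tendsto_skorokhodDist_of_tendstoUniformlyOn {ι : Type*} {p : Filter ι}
    {y : ι → ℝ → ℝ} {y₀ : ℝ → ℝ} (h : TendstoUniformlyOn y y₀ p (Icc 0 1)) :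
    Tendsto (fun n => skorokhodDist (y n) y₀) p (𝓝 0) := by
  refine Metric.tendsto_nhds.2 fun ε hε => ?_
  filter_upwards [Metric.tendstoUniformlyOn_iff.1 h (ε / 2) (half_pos hε)] with n hn
  have hle : skorokhodDist (y n) y₀ ≤ ε / 2 := skorokhodDist_le_of_abs_sub_le (half_pos hε).le
    fun t ht => by simpa only [Real.dist_eq, abs_sub_comm] using (hn t ht).le
  rw [Real.dist_eq, sub_zero, abs_of_nonneg (skorokhodDist_nonneg _ _)]
  exact hle.trans_lt (half_lt_self hε)

theorem stmt19_general (x : ℕ → ℝ → ℝ) (x₀ : ℝ → ℝ) (φ : ℕ → ℝ → ℝ) (φ₀ : ℝ → ℝ)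
    (hx : ∀ n, Cadlag (x n)) (hx₀ : ContinuousOn x₀ (Set.Icc (0:ℝ) 1))
    (hφmaps : ∀ n, Set.MapsTo (φ n) (Set.Icc (0:ℝ) 1) (Set.Icc (0:ℝ) 1))
    (hφ₀cont : ContinuousOn φ₀ (Set.Icc (0:ℝ) 1))
    (hφ₀maps : Set.MapsTo φ₀ (Set.Icc (0:ℝ) 1) (Set.Icc (0:ℝ) 1))
    (hxconv : Tendsto (fun n => skorokhodDist (x n) x₀) atTop (𝓝 0))
    (hφconv : Tendsto (fun n => skorokhodDist (φ n) φ₀) atTop (𝓝 0)) :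
    Tendsto (fun n => skorokhodDist (x n ∘ φ n) (x₀ ∘ φ₀)) atTop (𝓝 0) := by
  have hxu : TendstoUniformlyOn x x₀ atTop (Icc 0 1) :=
    tendstoUniformlyOn_of_tendsto_skorokhodDist (fun n => (hx n).isBounded_image) hx₀ hxconv
  have hφu : TendstoUniformlyOn φ φ₀ atTop (Icc 0 1) :=
    tendstoUniformlyOn_of_tendsto_skorokhodDist
      (fun n => Metric.isBounded_Icc 0 1 |>.subset (hφmaps n).image_subset) hφ₀cont hφconv
  exact tendsto_skorokhodDist_of_tendstoUniformlyOn <|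
    hxu.comp_of_mapsTo (isCompact_Icc.uniformContinuousOn_of_continuous hx₀) hφu hφmaps hφ₀maps

/-- continuity of composition: if `x_n → x` in `D[0,1]` (Skorokhod) with `x`
continuous, and the time changes `φ_n → φ` in `D₀` (non-decreasing càdlàg maps of `[0,1]`
into `[0,1]`) with `φ` continuous, then `x_n ∘ φ_n → x ∘ φ` in `D[0,1]`. -/
theorem stmt19 (x : ℕ → ℝ → ℝ) (x₀ : ℝ → ℝ) (φ : ℕ → ℝ → ℝ) (φ₀ : ℝ → ℝ)
    (hx : ∀ n, Cadlag (x n)) (hx₀ : ContinuousOn x₀ (Set.Icc (0:ℝ) 1))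
    (hφcadlag : ∀ n, Cadlag (φ n))
    (hφmono : ∀ n, MonotoneOn (φ n) (Set.Icc (0:ℝ) 1))
    (hφmaps : ∀ n, Set.MapsTo (φ n) (Set.Icc (0:ℝ) 1) (Set.Icc (0:ℝ) 1))
    (hφ₀cont : ContinuousOn φ₀ (Set.Icc (0:ℝ) 1))
    (hφ₀mono : MonotoneOn φ₀ (Set.Icc (0:ℝ) 1))
    (hφ₀maps : Set.MapsTo φ₀ (Set.Icc (0:ℝ) 1) (Set.Icc (0:ℝ) 1))
    (hxconv : Tendsto (fun n => skorokhodDist (x n) x₀) atTop (𝓝 0))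
    (hφconv : Tendsto (fun n => skorokhodDist (φ n) φ₀) atTop (𝓝 0)) :
    Tendsto (fun n => skorokhodDist (x n ∘ φ n) (x₀ ∘ φ₀)) atTop (𝓝 0) :=
  stmt19_general x x₀ φ φ₀ hx hx₀ hφmaps hφ₀cont hφ₀maps hxconv hφconv
end
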